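/- Let F be a field with char F ≠ 3, or more generally suppose z ∈ O has norm 1 and trace t(z) such that the polynomial t³ − 3t − t(z) has a root t₁ ∈ F with t₁² ≠ 1. Then there exists an octonion x with n(x) = 1 and x³ = z; explicitly, if z = αe₁ + βe₂ + u + v then x = ((α+t₁)/(t₁²−1))e₁ + ((β+t₁)/(t₁²−1))e₂ + u/(t₁²−1) + v/(t₁²−1) satisfies t(x) = t₁, n(x) = 1, and x³ = z. -/

import Mathlib

open Matrix

/-- The Zorn vector-matrix algebra: elements `(α, u; v, β)` with `α β : F`, `u v : F³`. -/
def Zorn (F : Type*) : Type _ := F × F × (Fin 3 → F) × (Fin 3 → F)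

namespace Zorn

variable {F : Type*} [Field F]

/-- Build a Zorn matrix from its four components. -/
def mk (a b : F) (u v : Fin 3 → F) : Zorn F := (a, b, u, v)

/-- The upper-left scalar entry `α`. -/
def al (x : Zorn F) : F := x.1
/-- The lower-right scalar entry `β`. -/
def be (x : Zorn F) : F := x.2.1
/-- The upper-right vector entry `u`. -/
def up (x : Zorn F) : Fin 3 → F := x.2.2.1
/-- The lower-left vector entry `v`. -/
def lo (x : Zorn F) : Fin 3 → F := x.2.2.2

instance : AddCommGroup (Zorn F) :=
  inferInstanceAs (AddCommGroup (F × F × (Fin 3 → F) × (Fin 3 → F)))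

instance : Module F (Zorn F) :=
  inferInstanceAs (Module F (F × F × (Fin 3 → F) × (Fin 3 → F)))

/-- Zorn vector-matrix multiplication. -/
instance : Mul (Zorn F) :=
  ⟨fun x y => mk (x.al * y.al + x.up ⬝ᵥ y.lo)
      (x.be * y.be + x.lo ⬝ᵥ y.up)
      (x.al • y.up + y.be • x.up - crossProduct x.lo y.lo)
      (y.al • x.lo + x.be • y.lo + crossProduct x.up y.up)⟩

instance : One (Zorn F) := ⟨mk 1 1 0 0⟩

/-- The standard conjugation (involution) of the Zorn algebra. -/
def conj (x : Zorn F) : Zorn F := mk x.be x.al (-x.up) (-x.lo)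

/-- The trace `t(a) = α + β` (the scalar such that `a + conj a = t a • 1`). -/
def t (x : Zorn F) : F := x.al + x.be

/-- The norm `n(a) = αβ - u·v` (the scalar such that `a * conj a = n a • 1`). -/
def n (x : Zorn F) : F := x.al * x.be - x.up ⬝ᵥ x.lo

/-- The idempotent `e₁`. -/
def e₁ : Zorn F := mk 1 0 0 0
/-- The idempotent `e₂`. -/
def e₂ : Zorn F := mk 0 1 0 0
/-- The basis element `u_i`. -/
def U (i : Fin 3) : Zorn F := mk 0 0 (Pi.single i 1) 0
/-- The basis element `v_i`. -/
def V (i : Fin 3) : Zorn F := mk 0 0 0 (Pi.single i 1)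

/-- An (algebra) automorphism of the Zorn algebra: a bijective `F`-linear,
multiplicative, unital self-map. -/
def IsAut (g : Zorn F → Zorn F) : Prop :=
  Function.Bijective g ∧ (∀ x y : Zorn F, g (x + y) = g x + g y) ∧
    (∀ (c : F) (x : Zorn F), g (c • x) = c • g x) ∧
    (∀ x y : Zorn F, g (x * y) = g x * g y) ∧ g 1 = 1

end Zorn

open Zorn

/-!
Every octonion satisfies `x² = t(x) x − n(x)`, so an octonion of norm one satisfies
`x³ = (t(x)² − 1) x − t(x)`. The candidate is `x = (z + t₁) / (t₁² − 1)`: the cubic equation for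
`t₁` gives `t(z + t₁) = t₁³ − t₁`, hence `t(x) = t₁`, and `n(z) = 1` gives
`n(z + t₁) = (t₁² − 1)²`, hence `n(x) = 1`. Then `x³ = (t₁² − 1) x − t₁ = z`.
-/

namespace Zorn

variable {F : Type*}

@[ext]
theorem ext {x y : Zorn F} (hal : x.al = y.al) (hbe : x.be = y.be) (hup : x.up = y.up)
    (hlo : x.lo = y.lo) : x = y :=
  Prod.ext hal (Prod.ext hbe (Prod.ext hup hlo))

section Components

variable (a b : F) (u v : Fin 3 → F)

@[simp] theorem al_mk : (mk a b u v).al = a := rfl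
@[simp] theorem be_mk : (mk a b u v).be = b := rfl
@[simp] theorem up_mk : (mk a b u v).up = u := rfl
@[simp] theorem lo_mk : (mk a b u v).lo = v := rfl

variable [Field F] (c : F) (x y : Zorn F)

@[simp] theorem al_add : (x + y).al = x.al + y.al := rfl
@[simp] theorem be_add : (x + y).be = x.be + y.be := rfl
@[simp] theorem up_add : (x + y).up = x.up + y.up := rfl
@[simp] theorem lo_add : (x + y).lo = x.lo + y.lo := rfl

@[simp] theorem al_sub : (x - y).al = x.al - y.al := rfl
@[simp] theorem be_sub : (x - y).be = x.be - y.be := rfl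
@[simp] theorem up_sub : (x - y).up = x.up - y.up := rfl
@[simp] theorem lo_sub : (x - y).lo = x.lo - y.lo := rfl

@[simp] theorem al_smul : (c • x).al = c * x.al := rfl
@[simp] theorem be_smul : (c • x).be = c * x.be := rfl
@[simp] theorem up_smul : (c • x).up = c • x.up := rfl
@[simp] theorem lo_smul : (c • x).lo = c • x.lo := rfl

@[simp] theorem al_one : (1 : Zorn F).al = 1 := rfl
@[simp] theorem be_one : (1 : Zorn F).be = 1 := rfl
@[simp] theorem up_one : (1 : Zorn F).up = 0 := rfl
@[simp] theorem lo_one : (1 : Zorn F).lo = 0 := rfl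

@[simp] theorem al_mul : (x * y).al = x.al * y.al + x.up ⬝ᵥ y.lo := rfl
@[simp] theorem be_mul : (x * y).be = x.be * y.be + x.lo ⬝ᵥ y.up := rfl
@[simp] theorem up_mul : (x * y).up = x.al • y.up + y.be • x.up - crossProduct x.lo y.lo := rfl
@[simp] theorem lo_mul : (x * y).lo = y.al • x.lo + x.be • y.lo + crossProduct x.up y.up := rfl

end Components

variable [Field F]

theorem t_smul (c : F) (x : Zorn F) : t (c • x) = c * t x := by
  simp only [t, al_smul, be_smul]; ring

theorem t_add_smul_one (x : Zorn F) (s : F) : t (x + s • 1) = t x + 2 * s := by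
  simp only [t, al_add, be_add, al_smul, be_smul, al_one, be_one]; ring

theorem n_smul (c : F) (x : Zorn F) : n (c • x) = c ^ 2 * n x := by
  simp only [n, al_smul, be_smul, up_smul, lo_smul, smul_dotProduct, dotProduct_smul,
    smul_eq_mul]
  ring

theorem n_add_smul_one (x : Zorn F) (s : F) : n (x + s • 1) = n x + s * t x + s ^ 2 := by
  simp only [n, t, al_add, be_add, up_add, lo_add, al_smul, be_smul, up_smul, lo_smul, al_one,
    be_one, up_one, lo_one, smul_zero, add_zero]
  ring

theorem mul_self_eq (x : Zorn F) : x * x = t x • x - n x • 1 := by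
  ext1
  · simp only [al_mul, al_sub, al_smul, al_one, t, n]; ring
  · simp only [be_mul, be_sub, be_smul, be_one, t, n, dotProduct_comm x.lo]; ring
  · simp [t, cross_self, add_smul]
  · simp [t, cross_self, add_smul]

theorem mul_smul_sub_smul_one (x y : Zorn F) (c d : F) :
    x * (c • y - d • 1) = c • (x * y) - d • x := by
  ext1
  · simp only [al_mul, al_sub, al_smul, al_one, lo_sub, lo_smul, lo_one, smul_zero, sub_zero,
      dotProduct_smul, smul_eq_mul]
    ring
  · simp only [be_mul, be_sub, be_smul, be_one, up_sub, up_smul, up_one, smul_zero, sub_zero,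
      dotProduct_smul, smul_eq_mul]
    ring
  · simp only [up_mul, up_sub, up_smul, up_one, be_sub, be_smul, be_one, lo_sub, lo_smul, lo_one,
      smul_zero, sub_zero, mul_one, map_smul]
    module
  · simp only [lo_mul, lo_sub, lo_smul, lo_one, al_sub, al_smul, al_one, up_sub, up_smul, up_one,
      smul_zero, sub_zero, mul_one, map_smul]
    module

theorem mul_mul_self_eq (x : Zorn F) :
    x * (x * x) = (t x ^ 2 - n x) • x - (t x * n x) • 1 := by
  rw [mul_self_eq, mul_smul_sub_smul_one, mul_self_eq]
  module

end Zorn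

/-- If `z` has norm one and `t₁` is a root of `t³ − 3t − t(z)` with `t₁² ≠ 1`,
then the explicitly given octonion `x` satisfies `t(x) = t₁`, `n(x) = 1` and
`x³ = z`. -/
theorem zorn_cube_root {F : Type*} [Field F] (z : Zorn F) (hz : Zorn.n z = 1)
    (t₁ : F) (hroot : t₁ ^ 3 - 3 * t₁ - Zorn.t z = 0) (ht₁ : t₁ ^ 2 ≠ 1) :
    let x : Zorn F := Zorn.mk ((z.al + t₁) / (t₁ ^ 2 - 1)) ((z.be + t₁) / (t₁ ^ 2 - 1))
      ((t₁ ^ 2 - 1)⁻¹ • z.up) ((t₁ ^ 2 - 1)⁻¹ • z.lo)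
    Zorn.t x = t₁ ∧ Zorn.n x = 1 ∧ x * (x * x) = z := by
  intro x
  have hd : t₁ ^ 2 - 1 ≠ 0 := sub_ne_zero.mpr ht₁
  have hx : x = (t₁ ^ 2 - 1)⁻¹ • (z + t₁ • 1) := by
    ext <;> simp [x, div_eq_inv_mul, mul_add]
  have htz : t z = t₁ ^ 3 - 3 * t₁ := (sub_eq_zero.mp hroot).symm
  have ht : t x = t₁ := by
    rw [hx, t_smul, t_add_smul_one, htz]
    field_simp
    ring
  have hn : n x = 1 := by
    rw [hx, n_smul, n_add_smul_one, hz, htz]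
    field_simp
    ring
  refine ⟨ht, hn, ?_⟩
  rw [mul_mul_self_eq, ht, hn, hx, smul_smul, mul_inv_cancel₀ hd, one_smul]
  module
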